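/- arXiv:math-ph/0312028 — 3 statements merged into one kernel-verified Lean document; each statement's English description precedes it below -/
import Mathlib

section
/- Let p ≥ 1 be an odd integer, r ≥ 1 a natural number, and ω ∈ ℝ with sin ω ≠ 0 and cos ω < −1 + (1 + cos (π·(p−1)/p))/r. Then for every θ : Fin r → ℝ such that θ 0 = 2·π·m/p for some integer m, there is no nontrivial θ-periodic Kirchhoff eigenfunction tuple with frequency ω. -/
open scoped BigOperators

lemma hasDerivAt_cos_mulx (ω x : ℝ) :
    HasDerivAt (fun y : ℝ => ((Real.cos (ω * y) : ℝ) : ℂ)) ((-(Real.sin (ω * x)) * ω : ℝ) : ℂ) x := by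
  have h1 : HasDerivAt (fun y : ℝ => ω * y) ω x := by simpa using (hasDerivAt_id x).const_mul ω
  exact HasDerivAt.ofReal_comp h1.cos

lemma hasDerivAt_sin_mulx (ω x : ℝ) :
    HasDerivAt (fun y : ℝ => ((Real.sin (ω * y) : ℝ) : ℂ)) (((Real.cos (ω * x)) * ω : ℝ) : ℂ) x := by
  have h1 : HasDerivAt (fun y : ℝ => ω * y) ω x := by simpa using (hasDerivAt_id x).const_mul ω
  exact HasDerivAt.ofReal_comp h1.sin

lemma ode_solution (ω : ℝ) (u : ℝ → ℂ)
    (h1 : Differentiable ℝ u) (h2 : Differentiable ℝ (deriv u))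
    (h3 : deriv (deriv u) = fun x => -(ω : ℂ) ^ 2 * u x) (x : ℝ) :
    (ω : ℂ) * u x = (ω : ℂ) * u 0 * (Real.cos (ω * x) : ℂ) + deriv u 0 * (Real.sin (ω * x) : ℂ)
    ∧ deriv u x = deriv u 0 * (Real.cos (ω * x) : ℂ) - (ω : ℂ) * u 0 * (Real.sin (ω * x) : ℂ) := by
  set F : ℝ → ℂ := fun y => (ω : ℂ) * u y * (Real.cos (ω * y) : ℂ) - deriv u y * (Real.sin (ω * y) : ℂ) with hF
  set G : ℝ → ℂ := fun y => (ω : ℂ) * u y * (Real.sin (ω * y) : ℂ) + deriv u y * (Real.cos (ω * y) : ℂ) with hG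
  have hu' : ∀ y : ℝ, HasDerivAt (deriv u) (-(ω : ℂ) ^ 2 * u y) y := by
    intro y
    have := (h2 y).hasDerivAt
    rwa [h3] at this
  have hFd : ∀ y : ℝ, HasDerivAt F 0 y := by
    intro y
    have := (((h1 y).hasDerivAt.const_mul ((ω : ℂ))).mul (hasDerivAt_cos_mulx ω y)).sub
      ((hu' y).mul (hasDerivAt_sin_mulx ω y))
    convert this using 1
    · rfl
    · rfl
    push_cast
    ring
  have hGd : ∀ y : ℝ, HasDerivAt G 0 y := by
    intro y
    have := (((h1 y).hasDerivAt.const_mul ((ω : ℂ))).mul (hasDerivAt_sin_mulx ω y)).add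
      ((hu' y).mul (hasDerivAt_cos_mulx ω y))
    convert this using 1
    · rfl
    · rfl
    push_cast
    ring
  have hFc : F x = F 0 :=
    is_const_of_deriv_eq_zero (fun y => (hFd y).differentiableAt) (fun y => (hFd y).deriv) x 0
  have hGc : G x = G 0 :=
    is_const_of_deriv_eq_zero (fun y => (hGd y).differentiableAt) (fun y => (hGd y).deriv) x 0
  simp only [hF, hG, mul_zero, Real.cos_zero, Real.sin_zero, Complex.ofReal_one,
    Complex.ofReal_zero, mul_one, sub_zero, add_zero] at hFc hGc
  have hid : (Real.cos (ω * x) : ℂ) ^ 2 + (Real.sin (ω * x) : ℂ) ^ 2 = 1 := by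
    have := Real.cos_sq_add_sin_sq (ω * x)
    exact_mod_cast congrArg (Complex.ofReal) this
  constructor
  · linear_combination (Real.cos (ω * x) : ℂ) * hFc + (Real.sin (ω * x) : ℂ) * hGc
      - ((ω : ℂ) * u x) * hid
  · linear_combination (Real.cos (ω * x) : ℂ) * hGc - (Real.sin (ω * x) : ℂ) * hFc
      - (deriv u x) * hid

lemma cos_bound_nat (p k : ℕ) (hk : 2 * k + 1 ≤ p) :
    Real.cos (Real.pi * ((p : ℝ) - 1) / p) ≤ Real.cos (2 * Real.pi * (k : ℝ) / p) := by
  have hp0 : (0 : ℝ) < p := by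
    have : 1 ≤ p := le_trans (Nat.le_add_left 1 (2 * k)) hk
    exact_mod_cast this
  have hπ := Real.pi_pos
  have hkr : 2 * (k : ℝ) + 1 ≤ (p : ℝ) := by exact_mod_cast hk
  apply Real.cos_le_cos_of_nonneg_of_le_pi
  · positivity
  · rw [div_le_iff₀ hp0]
    nlinarith
  · rw [div_le_div_iff₀ hp0 hp0]
    nlinarith [mul_nonneg (mul_nonneg hπ.le hp0.le) (by linarith : (0:ℝ) ≤ (p:ℝ) - 1 - 2*(k:ℝ))]

lemma cos_bound (p : ℕ) (hp : 1 ≤ p) (hodd : Odd p) (m : ℤ) :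
    Real.cos (Real.pi * ((p : ℝ) - 1) / p) ≤ Real.cos (2 * Real.pi * (m : ℝ) / p) := by
  have hpz : (0 : ℤ) < p := by exact_mod_cast hp
  have hp0 : (0 : ℝ) < p := by exact_mod_cast hp
  set k : ℕ := (m % p).toNat with hkdef
  have hk0 : (0 : ℤ) ≤ m % p := Int.emod_nonneg m hpz.ne'
  have hklt : (m % p) < p := Int.emod_lt_of_pos m hpz
  have hkcast : ((k : ℤ) : ℝ) = ((m % p : ℤ) : ℝ) := by
    rw [hkdef]; norm_cast; exact Int.toNat_of_nonneg hk0
  have hkltn : k < p := by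
    have : (k : ℤ) < p := by rw [hkdef, Int.toNat_of_nonneg hk0]; exact hklt
    exact_mod_cast this
  have hred : Real.cos (2 * Real.pi * (m : ℝ) / p) = Real.cos (2 * Real.pi * (k : ℝ) / p) := by
    have hm : (m : ℝ) = (p : ℝ) * ((m / p : ℤ) : ℝ) + (k : ℝ) := by
      have hk' : ((k : ℤ)) = m % p := Int.toNat_of_nonneg hk0
      have h : ((p : ℤ)) * (m / p) + (k : ℤ) = m := by rw [hk']; exact Int.mul_ediv_add_emod m p
      exact_mod_cast h.symm
    have harg : 2 * Real.pi * (m : ℝ) / p = 2 * Real.pi * (k : ℝ) / p + ((m / p : ℤ) : ℝ) * (2 * Real.pi) := by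
      field_simp [hm]; rw [hm]; ring
    rw [harg, Real.cos_add_int_mul_two_pi]
  rw [hred]
  by_cases hcase : 2 * k + 1 ≤ p
  · exact cos_bound_nat p k hcase
  · obtain ⟨t, ht⟩ := hodd
    have hge : p + 1 ≤ 2 * k := by omega
    have hk2 : 2 * (p - k) + 1 ≤ p := by omega
    have hkle : k ≤ p := hkltn.le
    have hcast : ((p - k : ℕ) : ℝ) = (p : ℝ) - (k : ℝ) := by
      push_cast [Nat.cast_sub hkle]; ring
    have heq : 2 * Real.pi * (k : ℝ) / p = -(2 * Real.pi * ((p - k : ℕ) : ℝ) / p) + 2 * Real.pi := by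
      rw [hcast]; field_simp; ring
    rw [heq, Real.cos_add_two_pi, Real.cos_neg]
    exact cos_bound_nat p (p - k) hk2


/-- A θ-periodic Kirchhoff eigenfunction tuple with frequency `ω` (eigenvalue `ω²`):
the eigenvalue problem (8.1) of the paper for the Kirchhoff Laplacian on the
equilateral metric Cayley graph.  It consists of twice differentiable functions
`u j : ℝ → ℂ` with `u j'' = −ω² u j`, the θ-periodic continuity conditions
`u j 0 = Z` and `exp(−iθ j)·u j 1 = Z`, and the Kirchhoff condition
`∑ j (exp(−iθ j)·(u j)' 1 − (u j)' 0) = 0`. -/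
def IsKirchhoffTuple (r : ℕ) (θ : Fin r → ℝ) (ω : ℝ)
    (u : Fin r → (ℝ → ℂ)) (Z : ℂ) : Prop :=
  (∀ j, Differentiable ℝ (u j) ∧ Differentiable ℝ (deriv (u j)) ∧
      deriv (deriv (u j)) = fun x => -(ω : ℂ) ^ 2 * u j x) ∧
  (∀ j, u j 0 = Z) ∧
  (∀ j, Complex.exp (-Complex.I * (θ j : ℂ)) * u j 1 = Z) ∧
  (∑ j, (Complex.exp (-Complex.I * (θ j : ℂ)) * deriv (u j) 1 - deriv (u j) 0)) = 0

/-- The gap-producing mechanism of Theorem 8.2 of the paper: if one generator has odd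
order `p` (so its quasimomentum component is confined to the p-th root-of-unity angles
`2πm/p`) and `cos ω` lies below the threshold `−1 + (1 + cos(π(p−1)/p))/r`, then the
dispersion relation has no solution and there is no nontrivial θ-periodic Kirchhoff
eigenfunction tuple with frequency `ω`. -/
theorem stmt17 (p : ℕ) (hp : 1 ≤ p) (hodd : Odd p)
    (r : ℕ) (hr : 1 ≤ r) (ω : ℝ) (hω : Real.sin ω ≠ 0)
    (hcos : Real.cos ω <
      -1 + (1 + Real.cos (Real.pi * ((p : ℝ) - 1) / p)) / r)
    (θ : Fin r → ℝ) (hθ : ∃ m : ℤ, θ ⟨0, hr⟩ = 2 * Real.pi * (m : ℝ) / p) :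
    ¬ ∃ (u : Fin r → (ℝ → ℂ)) (Z : ℂ),
        IsKirchhoffTuple r θ ω u Z ∧ ∃ j, u j ≠ 0 := by
  rintro ⟨u, Z, ⟨hdiff, hu0, hu1, hK⟩, j0, hj0⟩
  have hω0 : ω ≠ 0 := fun h => hω (by rw [h, Real.sin_zero])
  have hωC : (ω : ℂ) ≠ 0 := by exact_mod_cast hω0
  set c : ℂ := (Real.cos ω : ℂ) with hc
  set s : ℂ := (Real.sin ω : ℂ) with hs
  have hsne : s ≠ 0 := by rw [hs]; exact Complex.ofReal_ne_zero.mpr hω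
  have hid : c ^ 2 + s ^ 2 = 1 := by
    rw [hc, hs]
    exact_mod_cast congrArg Complex.ofReal (Real.cos_sq_add_sin_sq ω)
  -- the basic transfer relations at x = 1
  have hE : ∀ j, (ω : ℂ) * u j 1 = (ω : ℂ) * u j 0 * c + deriv (u j) 0 * s ∧
      deriv (u j) 1 = deriv (u j) 0 * c - (ω : ℂ) * u j 0 * s := by
    intro j
    obtain ⟨d1, d2, d3⟩ := hdiff j
    have := ode_solution ω (u j) d1 d2 d3 1
    rwa [mul_one] at this
  by_cases hZ : Z = 0
  · -- trivial case : all functions vanish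
    subst hZ
    apply hj0
    have h00 : u j0 0 = 0 := hu0 j0
    have h01 : u j0 1 = 0 :=
      (mul_eq_zero.mp (hu1 j0)).resolve_left (Complex.exp_ne_zero _)
    have hd0 : deriv (u j0) 0 = 0 := by
      have h := (hE j0).1
      rw [h00, h01] at h
      simp only [mul_zero, zero_mul, zero_add] at h
      exact (mul_eq_zero.mp h.symm).resolve_right hsne
    obtain ⟨d1, d2, d3⟩ := hdiff j0
    funext x
    have := (ode_solution ω (u j0) d1 d2 d3 x).1
    rw [h00, hd0] at this
    simp only [mul_zero, zero_mul, add_zero] at this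
    have := (mul_eq_zero.mp this).resolve_left hωC
    simpa using this
  · -- nontrivial case: the dispersion relation
    have hterm : ∀ j, Complex.exp (-Complex.I * (θ j : ℂ)) * deriv (u j) 1 - deriv (u j) 0
        = (2 * (ω : ℂ) * Z / s) * (c - (Real.cos (θ j) : ℂ)) := by
      intro j
      set g : ℂ := Complex.exp (-Complex.I * (θ j : ℂ)) with hg
      set e : ℂ := Complex.exp (Complex.I * (θ j : ℂ)) with he
      have hge : g * e = 1 := by
        rw [hg, he, ← Complex.exp_add]
        simp
      have hsum : e + g = 2 * (Real.cos (θ j) : ℂ) := by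
        rw [hg, he, Complex.ofReal_cos, Complex.cos]
        ring_nf
      have f1 : g * u j 1 = Z := hu1 j
      have f0 : u j 0 = Z := hu0 j
      obtain ⟨f2, f3⟩ := hE j
      rw [f0] at f2 f3
      -- u j 1 = Z * e
      have hu1e : u j 1 = Z * e := by
        have : e * (g * u j 1) = e * Z := by rw [f1]
        rw [← mul_assoc, mul_comm e g, hge, one_mul] at this
        rw [this]; ring
      rw [hu1e] at f2
      -- deriv (u j) 0 * s = ω Z (e - c)
      have ha : deriv (u j) 0 * s = (ω : ℂ) * Z * (e - c) := by
        linear_combination -f2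
      -- now the term
      rw [div_mul_eq_mul_div, eq_div_iff hsne]
      linear_combination (g * s) * f3 + (g * c - 1) * ha - ((ω : ℂ) * Z * g) * hid
        + ((ω : ℂ) * Z * c) * hge - ((ω : ℂ) * Z) * hsum
    -- dispersion relation
    have hfac : (2 * (ω : ℂ) * Z / s) ≠ 0 :=
      div_ne_zero (mul_ne_zero (mul_ne_zero two_ne_zero hωC) hZ) hsne
    have hsC : ∑ j, (c - (Real.cos (θ j) : ℂ)) = 0 := by
      have h : (2 * (ω : ℂ) * Z / s) * ∑ j, (c - (Real.cos (θ j) : ℂ)) = 0 := by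
        rw [Finset.mul_sum, ← hK]
        exact Finset.sum_congr rfl (fun j _ => (hterm j).symm)
      exact (mul_eq_zero.mp h).resolve_left hfac
    have hsum0 : ∑ j, (Real.cos ω - Real.cos (θ j)) = 0 := by
      have : ((∑ j, (Real.cos ω - Real.cos (θ j)) : ℝ) : ℂ) = 0 := by
        push_cast
        rw [hc] at hsC
        simpa [← Complex.ofReal_cos] using hsC
      exact_mod_cast this
    have hdisp : (r : ℝ) * Real.cos ω = ∑ j, Real.cos (θ j) := by
      rw [Finset.sum_sub_distrib, sub_eq_zero, Finset.sum_const, Finset.card_univ,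
        Fintype.card_fin, nsmul_eq_mul] at hsum0
      exact hsum0
    obtain ⟨m, hm⟩ := hθ
    set A := Real.cos (Real.pi * ((p : ℝ) - 1) / p) with hA
    set j₀ : Fin r := ⟨0, hr⟩ with hj₀
    have hbound : A ≤ Real.cos (θ j₀) := by
      rw [hm]; exact cos_bound p hp hodd m
    have hsumlb : Real.cos (θ j₀) - ((r : ℝ) - 1) ≤ ∑ j, Real.cos (θ j) := by
      have h1 : ∑ _j ∈ Finset.univ.erase j₀, (-1 : ℝ) ≤
          ∑ j ∈ Finset.univ.erase j₀, Real.cos (θ j) :=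
        Finset.sum_le_sum (fun j _ => Real.neg_one_le_cos (θ j))
      have h2 : ∑ j ∈ Finset.univ.erase j₀, Real.cos (θ j) + Real.cos (θ j₀)
          = ∑ j, Real.cos (θ j) :=
        Finset.sum_erase_add _ _ (Finset.mem_univ j₀)
      have h3 : (Finset.univ.erase j₀).card = r - 1 := by
        rw [Finset.card_erase_of_mem (Finset.mem_univ _), Finset.card_univ, Fintype.card_fin]
      rw [Finset.sum_const, h3, nsmul_eq_mul] at h1
      have hrr : ((r - 1 : ℕ) : ℝ) = (r : ℝ) - 1 := by
        push_cast [Nat.cast_sub hr]; ring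
      rw [hrr] at h1
      linarith
    have hr0 : (0 : ℝ) < r := by exact_mod_cast hr
    have hx : (r : ℝ) * (-1 + (1 + A) / r) = -(r : ℝ) + 1 + A := by
      field_simp
      ring
    have hlt : (r : ℝ) * Real.cos ω < -(r : ℝ) + 1 + A := by
      calc (r : ℝ) * Real.cos ω < (r : ℝ) * (-1 + (1 + A) / r) :=
            mul_lt_mul_of_pos_left hcos hr0
        _ = -(r : ℝ) + 1 + A := hx
    linarith
end

section
/- Let r ≥ 1 be a natural number and ω ∈ ℝ with sin ω ≠ 0 and cos ω < −1 + 2/r. Then for every θ : Fin r → ℝ with θ 0 = 0, there is no nontrivial θ-periodic Kirchhoff eigenfunction tuple with frequency ω. -/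
open scoped BigOperators

lemma ode_exp {f : ℝ → ℂ} {c : ℂ} (h : ∀ x, HasDerivAt f (c * f x) x) (x : ℝ) :
    f x = f 0 * Complex.exp (c * x) := by
  have hexp : ∀ y : ℝ, HasDerivAt (fun y : ℝ => Complex.exp (-(c * (y : ℂ))))
      (Complex.exp (-(c * (y : ℂ))) * (-c)) y := by
    intro y
    have h1 : HasDerivAt (fun z : ℂ => Complex.exp (-(c * z)))
        (Complex.exp (-(c * (y : ℂ))) * (-c)) ((y : ℝ) : ℂ) := by
      have := (((hasDerivAt_id ((y : ℝ) : ℂ)).const_mul (-c))).cexp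
      simpa [neg_mul, mul_comm] using this
    simpa using h1.comp_ofReal
  have key : ∀ y : ℝ, f y * Complex.exp (-(c * (y : ℂ))) = f 0 := by
    have hg : ∀ y : ℝ, HasDerivAt (fun y : ℝ => f y * Complex.exp (-(c * (y : ℂ)))) 0 y := by
      intro y
      have h2 := (h y).mul (hexp y)
      refine h2.congr_deriv ?_
      ring
    intro y
    have h3 := is_const_of_deriv_eq_zero (f := fun y : ℝ => f y * Complex.exp (-(c * (y : ℂ))))
      (fun y => (hg y).differentiableAt) (fun y => (hg y).deriv) y 0
    simpa using h3
  calc f x = f x * Complex.exp (-(c * (x : ℂ))) * Complex.exp (c * x) := by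
        rw [mul_assoc, ← Complex.exp_add]; simp
    _ = f 0 * Complex.exp (c * x) := by rw [key x]

lemma edge_exp {f : ℝ → ℂ} {ω : ℝ} (hd : Differentiable ℝ f)
    (hd' : Differentiable ℝ (deriv f))
    (hode : deriv (deriv f) = fun x => -(ω : ℂ) ^ 2 * f x) (x : ℝ) :
    deriv f x + Complex.I * ω * f x
      = (deriv f 0 + Complex.I * ω * f 0) * Complex.exp (Complex.I * ω * x) ∧
    deriv f x - Complex.I * ω * f x
      = (deriv f 0 - Complex.I * ω * f 0) * Complex.exp (-(Complex.I * ω) * x) := by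
  constructor
  · exact ode_exp (f := fun x : ℝ => deriv f x + Complex.I * ω * f x) (c := Complex.I * ω)
      (fun y => by
        have h2 := ((hd' y).hasDerivAt).add (((hd y).hasDerivAt).const_mul (Complex.I * ω))
        refine (h2.congr_deriv ?_)
        rw [hode]
        linear_combination -(ω : ℂ) ^ 2 * f y * Complex.I_sq) x
  · have := ode_exp (f := fun x : ℝ => deriv f x - Complex.I * ω * f x) (c := -(Complex.I * ω))
      (fun y => by
        have h2 := ((hd' y).hasDerivAt).sub (((hd y).hasDerivAt).const_mul (Complex.I * ω))
        refine (h2.congr_deriv ?_)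
        rw [hode]
        linear_combination -(ω : ℂ) ^ 2 * f y * Complex.I_sq) x
    simpa using this


/-- The mechanism of Theorem 8.4 of the paper (gap generation by decoration with
loops): a loop attached at each vertex freezes one quasimomentum component at
`θ 0 = 0`, forcing `(1/r)∑ cos θ j ≥ −1 + 2/r`; hence if `cos ω < −1 + 2/r`
(and `sin ω ≠ 0`), there is no nontrivial θ-periodic Kirchhoff eigenfunction tuple
with frequency `ω`. -/
theorem stmt18 (r : ℕ) (hr : 1 ≤ r) (ω : ℝ) (hω : Real.sin ω ≠ 0)
    (hcos : Real.cos ω < -1 + 2 / (r : ℝ))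
    (θ : Fin r → ℝ) (hθ : θ ⟨0, hr⟩ = 0) :
    ¬ ∃ (u : Fin r → (ℝ → ℂ)) (Z : ℂ),
        IsKirchhoffTuple r θ ω u Z ∧ ∃ j, u j ≠ 0 := by
  rintro ⟨u, Z, ⟨hdiff, h0, h1, hK⟩, j0, hj0⟩
  have hωne : ω ≠ 0 := fun h => hω (by simp [h])
  have hsinC : (Real.sin ω : ℂ) ≠ 0 := by exact_mod_cast hω
  set p : ℂ := Complex.exp (Complex.I * ω) with hp
  set q : ℂ := Complex.exp (-(Complex.I * ω)) with hq
  have hpq : p * q = 1 := by rw [hp, hq, ← Complex.exp_add]; simp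
  have hrw1 : Complex.I * (ω : ℂ) = ((ω : ℝ) : ℂ) * Complex.I := by ring
  have hrw2 : -(Complex.I * (ω : ℂ)) = ((-ω : ℝ) : ℂ) * Complex.I := by push_cast; ring
  have hpsum : p + q = 2 * Real.cos ω := by
    rw [hp, hq, hrw2, hrw1, Complex.exp_mul_I, Complex.exp_mul_I]
    push_cast [Complex.cos_neg, Complex.sin_neg]
    ring
  have hpdiff : p - q = 2 * Complex.I * Real.sin ω := by
    rw [hp, hq, hrw2, hrw1, Complex.exp_mul_I, Complex.exp_mul_I]
    push_cast [Complex.cos_neg, Complex.sin_neg]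
    ring
  have hpdne : p - q ≠ 0 := by
    rw [hpdiff]
    exact mul_ne_zero (mul_ne_zero two_ne_zero Complex.I_ne_zero) hsinC
  -- key identity per edge
  have key : ∀ j, (p - q) * (Complex.exp (-Complex.I * (θ j : ℂ)) * deriv (u j) 1 - deriv (u j) 0)
      = 2 * Complex.I * (ω : ℂ) * Z * ((p + q) - 2 * Real.cos (θ j)) := by
    intro j
    obtain ⟨hd, hd', hode⟩ := hdiff j
    obtain ⟨E1, E2⟩ := edge_exp hd hd' hode 1
    rw [Complex.ofReal_one, mul_one] at E1 E2
    set t : ℂ := Complex.exp (-Complex.I * (θ j : ℂ)) with ht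
    set t' : ℂ := Complex.exp (Complex.I * (θ j : ℂ)) with ht'
    have htt' : t * t' = 1 := by rw [ht, ht', ← Complex.exp_add]; simp
    have ht2 : t + t' = 2 * Real.cos (θ j) := by
      rw [ht, ht', show -Complex.I * ((θ j : ℝ) : ℂ) = ((-(θ j) : ℝ) : ℂ) * Complex.I by
        push_cast; ring,
        show Complex.I * ((θ j : ℝ) : ℂ) = ((θ j : ℝ) : ℂ) * Complex.I by ring,
        Complex.exp_mul_I, Complex.exp_mul_I]
      push_cast [Complex.cos_neg, Complex.sin_neg]
      ring
    have ht0 : t ≠ 0 := Complex.exp_ne_zero _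
    have hZ1 : u j 0 = Z := h0 j
    have hZ2 : t * u j 1 = Z := h1 j
    rw [hZ1] at E1 E2
    rw [← hp] at E1
    rw [← hq] at E2
    apply mul_left_cancel₀ ht0
    linear_combination (t * (1 - t * q)) * E1 + (t * (t * p - 1)) * E2
      + (-Complex.I * (ω : ℂ) * (2 - t * (p + q))) * hZ2
      + (-2 * Complex.I * (ω : ℂ) * Z * t ^ 2) * hpq
      + (2 * Complex.I * (ω : ℂ) * Z) * htt'
      + (-2 * Complex.I * (ω : ℂ) * Z * t) * ht2
  by_cases hZ : Z = 0
  · -- all u j vanish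
    apply hj0
    funext x
    obtain ⟨hd, hd', hode⟩ := hdiff j0
    obtain ⟨E1, E2⟩ := edge_exp hd hd' hode 1
    rw [Complex.ofReal_one, mul_one] at E1 E2
    have hZ1 : u j0 0 = 0 := by rw [h0 j0, hZ]
    have hZ2 : u j0 1 = 0 := by
      have := h1 j0
      rw [hZ] at this
      exact (mul_eq_zero.mp this).resolve_left (Complex.exp_ne_zero _)
    rw [hZ1, hZ2] at E1 E2
    simp only [mul_zero, add_zero, sub_zero, zero_sub] at E1 E2
    have hd0 : deriv (u j0) 0 = 0 := by
      have h4 : deriv (u j0) 0 * (p - q) = 0 := by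
        rw [hp, hq]
        linear_combination E2 - E1
      rcases mul_eq_zero.mp h4 with h | h
      · exact h
      · exact absurd h hpdne
    obtain ⟨F1, F2⟩ := edge_exp hd hd' hode x
    rw [hZ1, hd0] at F1 F2
    simp only [mul_zero, add_zero, sub_zero, zero_mul, zero_add, zero_sub] at F1 F2
    have hc : (2 : ℂ) * (Complex.I * ω) ≠ 0 := by
      simp [Complex.I_ne_zero, Complex.ofReal_ne_zero.mpr hωne]
    have : (2 : ℂ) * (Complex.I * ω) * u j0 x = 0 := by linear_combination F1 - F2
    have := (mul_eq_zero.mp this).resolve_left hc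
    simpa using this
  · -- dispersion relation
    have h5 : ∑ j, (p - q) * (Complex.exp (-Complex.I * (θ j : ℂ)) * deriv (u j) 1
        - deriv (u j) 0) = ∑ j, 2 * Complex.I * (ω : ℂ) * Z * ((p + q) - 2 * Real.cos (θ j)) :=
      Finset.sum_congr rfl (fun j _ => key j)
    rw [← Finset.mul_sum, hK, mul_zero] at h5
    have h5' : (0 : ℂ) = 2 * Complex.I * (ω : ℂ) * Z
        * ∑ j, ((p + q) - 2 * (Real.cos (θ j) : ℂ)) := by
      rw [Finset.mul_sum]; exact h5
    have hfac : (2 : ℂ) * Complex.I * (ω : ℂ) * Z ≠ 0 := by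
      simp [Complex.I_ne_zero, Complex.ofReal_ne_zero.mpr hωne, hZ]
    have h5'' : ∑ j, ((p + q) - 2 * (Real.cos (θ j) : ℂ)) = 0 :=
      (mul_eq_zero.mp h5'.symm).resolve_left hfac
    have h6 : (r : ℂ) * (p + q) - ∑ j, 2 * (Real.cos (θ j) : ℂ) = 0 := by
      rw [Finset.sum_sub_distrib, Finset.sum_const, Finset.card_univ, Fintype.card_fin,
        nsmul_eq_mul] at h5''
      exact h5''
    rw [hpsum] at h6
    have h7 : (r : ℝ) * Real.cos ω = ∑ j, Real.cos (θ j) := by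
      have h8 : (r : ℂ) * (2 * Real.cos ω) = ∑ j, 2 * (Real.cos (θ j) : ℂ) := by
        linear_combination h6
      have h9 : ((r * (2 * Real.cos ω) : ℝ) : ℂ) = ((∑ j, 2 * Real.cos (θ j) : ℝ) : ℂ) := by
        exact_mod_cast h8
    -- extract real part
      have h10 := Complex.ofReal_injective h9
      have : (r : ℝ) * (2 * Real.cos ω) = ∑ j, 2 * Real.cos (θ j) := h10
      rw [← Finset.mul_sum] at this
      linarith
    -- lower bound on sum of cosines
    have hj0mem : (⟨0, hr⟩ : Fin r) ∈ Finset.univ := Finset.mem_univ _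
    have hbound : (2 : ℝ) - r ≤ ∑ j, Real.cos (θ j) := by
      rw [← Finset.sum_erase_add _ _ hj0mem, hθ, Real.cos_zero]
      have hcard : ((Finset.univ.erase (⟨0, hr⟩ : Fin r)).card : ℝ) = (r : ℝ) - 1 := by
        rw [Finset.card_erase_of_mem hj0mem]
        simp
        have : 1 ≤ r := hr
        push_cast [Nat.cast_sub this]
        ring
      have h11 : ((Finset.univ.erase (⟨0, hr⟩ : Fin r)).card : ℝ) * (-1)
          ≤ ∑ j ∈ Finset.univ.erase (⟨0, hr⟩ : Fin r), Real.cos (θ j) := by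
        have := Finset.card_nsmul_le_sum (Finset.univ.erase (⟨0, hr⟩ : Fin r))
          (fun j => Real.cos (θ j)) (-1) (fun j _ => Real.neg_one_le_cos _)
        simpa [nsmul_eq_mul] using this
      rw [hcard] at h11
      linarith
    have hrpos : (0 : ℝ) < r := by exact_mod_cast hr
    have h12 : (r : ℝ) * Real.cos ω < (r : ℝ) * (-1 + 2 / r) :=
      mul_lt_mul_of_pos_left hcos hrpos
    have h13 : (r : ℝ) * (-1 + 2 / r) = -r + 2 := by field_simp
    rw [h7] at h12
    linarith
end

section
/- Let r ≥ 1 be a natural number, c > 0 a real number, ℓ ∈ ℕ, and set ω := (2·ℓ + 1)·π/2. If c·ω > 2·r (equivalently c·(2ℓ+1)·π > 4r), then for every θ : Fin r → ℝ there is no nontrivial θ-periodic borderline eigenfunction tuple with frequency ω and coupling c. -/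
open scoped BigOperators

/-- A θ-periodic borderline eigenfunction tuple with frequency `ω` and coupling `c`:
the eigenvalue problem (8.4) of the paper for the borderline limit operator `Q₀` on
the equilateral metric Cayley graph (with `c²` the volume of the unscaled vertex
neighbourhood).  It consists of twice differentiable functions `u j : ℝ → ℂ` with
`u j'' = −ω² u j`, the θ-periodic continuity conditions `u j 0 = Z` and
`exp(−iθ j)·u j 1 = Z`, and the energy-dependent vertex condition
`∑ j (exp(−iθ j)·(u j)' 1 − (u j)' 0) = c·ω²·Z`. -/
def IsBorderlineTuple (r : ℕ) (c : ℝ) (θ : Fin r → ℝ) (ω : ℝ)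
    (u : Fin r → (ℝ → ℂ)) (Z : ℂ) : Prop :=
  (∀ j, Differentiable ℝ (u j) ∧ Differentiable ℝ (deriv (u j)) ∧
      deriv (deriv (u j)) = fun x => -(ω : ℂ) ^ 2 * u j x) ∧
  (∀ j, u j 0 = Z) ∧
  (∀ j, Complex.exp (-Complex.I * (θ j : ℂ)) * u j 1 = Z) ∧
  (∑ j, (Complex.exp (-Complex.I * (θ j : ℂ)) * deriv (u j) 1 - deriv (u j) 0)) =
    (c : ℂ) * (ω : ℂ) ^ 2 * Z

lemma ode_exp_aux (a : ℂ) (f : ℝ → ℂ) (hf : Differentiable ℝ f)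
    (hf' : ∀ x, deriv f x = a * f x) (x : ℝ) :
    f x = f 0 * Complex.exp (a * x) := by
  have key : ∀ t : ℝ, HasDerivAt (fun s : ℝ => f s * Complex.exp (-(a * s))) 0 t := by
    intro t
    have h1 : HasDerivAt f (a * f t) t := by
      have := (hf t).hasDerivAt
      rwa [hf' t] at this
    have h2 : HasDerivAt (fun s : ℝ => Complex.exp (-(a * s)))
        (Complex.exp (-(a * t)) * (-a)) t := by
      have e1 : HasDerivAt (fun z : ℂ => Complex.exp (-(a * z)))
          (Complex.exp (-(a * (t:ℂ))) * (-a)) (t : ℂ) := by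
        have hinner : HasDerivAt (fun z : ℂ => -(a * z)) (-a) (t : ℂ) := by
          simpa using ((hasDerivAt_id (t:ℂ)).const_mul a).fun_neg
        exact hinner.cexp
      exact e1.comp_ofReal
    have h3 := h1.fun_mul h2
    convert h3 using 1
    · rfl
    ring
  have hconst := is_const_of_deriv_eq_zero
    (fun t => (key t).differentiableAt) (fun t => (key t).deriv) x 0
  rw [show ((0:ℝ):ℂ) = 0 by norm_num, mul_zero, neg_zero, Complex.exp_zero, mul_one] at hconst
  rw [Complex.exp_neg] at hconst
  field_simp at hconst
  rw [hconst, mul_comm]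

/-- The core of Theorem 8.5 of the paper: at `ω = (2ℓ+1)π/2` the left-hand side of the
borderline dispersion relation `2r cos ω − cω sin ω = 2∑ cos θ j` has absolute value
`cω`, which exceeds the maximal possible value `2r` of the right-hand side once
`cω > 2r`; hence there is no nontrivial θ-periodic borderline eigenfunction tuple
with this frequency, producing gaps around `(2ℓ+1)²π²/4`. -/
theorem stmt19 (r : ℕ) (hr : 1 ≤ r) (c : ℝ) (hc : 0 < c) (ℓ : ℕ)
    (ω : ℝ) (hω : ω = (2 * (ℓ : ℝ) + 1) * Real.pi / 2)
    (hbig : 2 * (r : ℝ) < c * ω) (θ : Fin r → ℝ) :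
    ¬ ∃ (u : Fin r → (ℝ → ℂ)) (Z : ℂ),
        IsBorderlineTuple r c θ ω u Z ∧ ∃ j, u j ≠ 0 := by
  rintro ⟨u, Z, ⟨hdiff, h0, h1, hsum⟩, j₀, hj₀⟩
  have hπ := Real.pi_pos
  have hωpos : 0 < ω := by rw [hω]; positivity
  have hωne : (ω:ℂ) ≠ 0 := Complex.ofReal_ne_zero.mpr hωpos.ne'
  set E := Complex.exp (Complex.I * ω) with hE
  have hE2 : E ^ 2 = -1 := by
    have h1' : E ^ 2 = Complex.exp ((2:ℕ) * (Complex.I * ω)) := by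
      rw [Complex.exp_nat_mul]
    have h2' : ((2:ℕ):ℂ) * (Complex.I * (ω:ℂ)) =
        ((2*ℓ+1 : ℕ):ℂ) * (Real.pi * Complex.I) := by
      rw [hω]; push_cast; ring
    rw [h1', h2', Complex.exp_nat_mul, Complex.exp_pi_mul_I]
    rw [Odd.neg_one_pow ⟨ℓ, by ring⟩]
  have hEne : E ≠ 0 := Complex.exp_ne_zero _
  have hEneg : Complex.exp (-(Complex.I * ω)) = -E := by
    rw [Complex.exp_neg]
    rw [inv_eq_iff_eq_inv, eq_comm, inv_eq_iff_eq_inv]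
    field_simp
    linear_combination -hE2
  -- full ODE consequences
  have wfull : ∀ j x, deriv (u j) x + Complex.I * ω * u j x =
      (deriv (u j) 0 + Complex.I * ω * Z) * Complex.exp (Complex.I * ω * x) := by
    intro j x
    obtain ⟨hd1, hd2, hd3⟩ := hdiff j
    have hdw : ∀ t, deriv (fun s => deriv (u j) s + Complex.I * ω * u j s) t =
        Complex.I * ω * (deriv (u j) t + Complex.I * ω * u j t) := by
      intro t
      rw [deriv_fun_add (hd2 t) ((hd1 t).const_mul _), deriv_const_mul _ (hd1 t),
        show deriv (deriv (u j)) t = -(ω:ℂ)^2 * u j t from congrFun hd3 t]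
      linear_combination (-(ω:ℂ)^2 * u j t) * Complex.I_sq
    have := ode_exp_aux (Complex.I * ω) _ (hd2.add (hd1.const_mul _)) hdw x
    simpa [h0 j] using this
  have yfull : ∀ j x, deriv (u j) x - Complex.I * ω * u j x =
      (deriv (u j) 0 - Complex.I * ω * Z) * Complex.exp (-(Complex.I * ω) * x) := by
    intro j x
    obtain ⟨hd1, hd2, hd3⟩ := hdiff j
    have hdw : ∀ t, deriv (fun s => deriv (u j) s - Complex.I * ω * u j s) t =
        -(Complex.I * ω) * (deriv (u j) t - Complex.I * ω * u j t) := by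
      intro t
      rw [deriv_fun_sub (hd2 t) ((hd1 t).const_mul _), deriv_const_mul _ (hd1 t),
        show deriv (deriv (u j)) t = -(ω:ℂ)^2 * u j t from congrFun hd3 t]
      linear_combination (-(ω:ℂ)^2 * u j t) * Complex.I_sq
    have := ode_exp_aux (-(Complex.I * ω)) _ (hd2.sub (hd1.const_mul _)) hdw x
    simpa [h0 j] using this
  have keyW : ∀ j, deriv (u j) 1 + Complex.I * ω * u j 1 =
      (deriv (u j) 0 + Complex.I * ω * Z) * E := by
    intro j
    have := wfull j 1
    simpa using this
  have keyY : ∀ j, deriv (u j) 1 - Complex.I * ω * u j 1 =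
      (deriv (u j) 0 - Complex.I * ω * Z) * (-E) := by
    intro j
    have := yfull j 1
    rw [show (-(Complex.I * (ω:ℂ)) * ((1:ℝ):ℂ)) = -(Complex.I * ω) by push_cast; ring,
      hEneg] at this
    exact this
  have hu1 : ∀ j, u j 1 = Complex.exp (Complex.I * θ j) * Z := by
    intro j
    have h := h1 j
    have h2 : Complex.exp (Complex.I * θ j) * (Complex.exp (-Complex.I * θ j) * u j 1)
        = Complex.exp (Complex.I * θ j) * Z := by rw [h]
    rwa [← mul_assoc, ← Complex.exp_add,
      show Complex.I * (θ j:ℂ) + -Complex.I * θ j = 0 by ring,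
      Complex.exp_zero, one_mul] at h2
  have hderiv1 : ∀ j, deriv (u j) 1 = Complex.I * ω * Z * E := by
    intro j
    linear_combination (keyW j) / 2 + (keyY j) / 2
  have hderiv0 : ∀ j, deriv (u j) 0 = -(Complex.I * ω) * u j 1 * E := by
    intro j
    linear_combination E / 2 * (keyW j) - E / 2 * (keyY j) + (deriv (u j) 0) * hE2
  by_cases hZ : Z = 0
  · -- trivial tuple: contradiction with nontriviality
    apply hj₀
    funext x
    have hu10 : u j₀ 1 = 0 := by rw [hu1 j₀, hZ, mul_zero]
    have hd0 : deriv (u j₀) 0 = 0 := by rw [hderiv0 j₀, hu10]; ring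
    have hw := wfull j₀ x
    have hy := yfull j₀ x
    rw [hd0, hZ] at hw hy
    simp only [mul_zero, add_zero, sub_zero, zero_mul] at hw hy
    have h2 : (2 * Complex.I * (ω:ℂ)) * u j₀ x = 0 := by linear_combination hw - hy
    have h3 : u j₀ x = 0 := by
      rcases mul_eq_zero.mp h2 with h | h
      · exfalso
        rcases mul_eq_zero.mp h with h' | h'
        · rcases mul_eq_zero.mp h' with h'' | h''
          · norm_num at h''
          · exact Complex.I_ne_zero h''
        · exact hωne h'
      · exact h
    simpa using h3
  · -- nontrivial Z: dispersion relation contradiction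
    have hterm : ∀ j ∈ Finset.univ,
        Complex.exp (-Complex.I * (θ j:ℂ)) * deriv (u j) 1 - deriv (u j) 0 =
        Complex.I * ω * Z * E * (2 * (Real.cos (θ j) : ℂ)) := by
      intro j _
      rw [hderiv1 j, hderiv0 j, hu1 j]
      have hcos : Complex.exp (-Complex.I * (θ j:ℂ)) + Complex.exp (Complex.I * θ j)
          = 2 * (Real.cos (θ j) : ℂ) := by
        rw [Complex.ofReal_cos, Complex.cos]
        ring_nf
      linear_combination Complex.I * ω * Z * E * hcos
    rw [Finset.sum_congr rfl hterm, ← Finset.mul_sum] at hsum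
    set S : ℝ := ∑ j, Real.cos (θ j) with hS
    have hsum' : Complex.I * ω * Z * E * (2 * (S:ℂ)) = (c:ℂ) * ω^2 * Z := by
      rw [← hsum]
      congr 1
      rw [hS]
      push_cast
      rw [Finset.mul_sum]
    have hfac : (Complex.I * E * (2*(S:ℂ)) - (c:ℂ)*ω) * ((ω:ℂ) * Z) = 0 := by
      linear_combination hsum'
    have hkey : Complex.I * E * (2*(S:ℂ)) = (c:ℂ)*ω := by
      rcases mul_eq_zero.mp hfac with h | h
      · exact sub_eq_zero.mp h
      · exfalso
        rcases mul_eq_zero.mp h with h' | h'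
        · exact hωne h'
        · exact hZ h'
    have habs := congrArg (‖·‖) hkey
    rw [norm_mul, norm_mul, Complex.norm_I, one_mul] at habs
    have hEabs : ‖E‖ = 1 := by
      rw [hE, Complex.norm_exp]
      simp
    rw [hEabs, one_mul] at habs
    have habs2 : |2 * S| = c * ω := by
      have : ‖(2*(S:ℂ))‖ = ‖(c:ℂ) * ω‖ := habs
      rw [show (2*(S:ℂ)) = ((2*S : ℝ):ℂ) by push_cast; ring,
        show ((c:ℂ) * ω) = (((c*ω : ℝ)):ℂ) by push_cast; ring,
        Complex.norm_real, Complex.norm_real, Real.norm_eq_abs, Real.norm_eq_abs] at this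
      rw [this]
      exact abs_of_pos (by positivity)
    have hSbound : |S| ≤ (r:ℝ) := by
      calc |S| ≤ ∑ j, |Real.cos (θ j)| := Finset.abs_sum_le_sum_abs _ _
        _ ≤ ∑ _j : Fin r, (1:ℝ) :=
          Finset.sum_le_sum (fun j _ => Real.abs_cos_le_one (θ j))
        _ = r := by simp
    have : c * ω ≤ 2 * r := by
      rw [← habs2]
      calc |2*S| = 2*|S| := by rw [abs_mul]; norm_num
        _ ≤ 2*r := by linarith
    linarith
end
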